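/- Let n ≥ 1, let 1 ≤ p ≤ ∞ and 1 ≤ q ≤ ∞, let α, β > -1 and let a, b, c be real numbers. If T_{a,b,c} is bounded from L^p_α to L^q_β (with L^∞ in place of L^p_α when p = ∞, and in place of L^q_β when q = ∞), then b > -1. -/

import Mathlib

open MeasureTheory Complex
open scoped ENNReal

noncomputable section

/-- `ℂ^n` with the Euclidean (Hermitian) structure. -/
abbrev Cn (n : ℕ) := EuclideanSpace ℂ (Fin n)

instance (n : ℕ) : MeasurableSpace (Cn n) := WithLp.measurableSpace 2 (Fin n → ℂ)
instance (n : ℕ) : BorelSpace (Cn n) := PiLp.borelSpace 2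

/-- The open unit ball `B_n` of `ℂ^n`. -/
def unitBall (n : ℕ) : Set (Cn n) := Metric.ball 0 1

/-- Lebesgue volume measure on `B_n`, normalized so that `v(B_n) = 1`. -/
def vol (n : ℕ) : Measure (Cn n) :=
  (volume (unitBall n))⁻¹ • volume.restrict (unitBall n)

/-- The weighted measure `dv_γ = c_γ (1-|z|²)^γ dv`, with
`c_γ = Γ(n+γ+1)/(n! Γ(γ+1))`. -/
def wvol (n : ℕ) (γ : ℝ) : Measure (Cn n) :=
  (vol n).withDensity fun z =>
    ENNReal.ofReal
      ((Real.Gamma ((n : ℝ) + γ + 1) / ((n.factorial : ℝ) * Real.Gamma (γ + 1))) *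
        (1 - ‖z‖ ^ 2) ^ γ)

/-- The Hermitian pairing `⟨z,w⟩ = ∑ z_j conj(w_j)`. -/
def herm {n : ℕ} (z w : Cn n) : ℂ := ∑ j, z j * (starRingEnd ℂ) (w j)

/-- Kernel of the Forelli–Rudin type operator `T_{a,b,c}`:
`(1-|z|²)^a (1-|w|²)^b (1-⟨z,w⟩)^{-c}` (principal branch power). -/
def Tker (n : ℕ) (a b c : ℝ) (z w : Cn n) : ℂ :=
  (((1 - ‖z‖ ^ 2) ^ a * (1 - ‖w‖ ^ 2) ^ b : ℝ) : ℂ) * (1 - herm z w) ^ (-(c : ℂ))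

/-- Kernel of the Forelli–Rudin type operator `S_{a,b,c}`:
`(1-|z|²)^a (1-|w|²)^b |1-⟨z,w⟩|^{-c}`. -/
def Sker (n : ℕ) (a b c : ℝ) (z w : Cn n) : ℂ :=
  (((1 - ‖z‖ ^ 2) ^ a * (1 - ‖w‖ ^ 2) ^ b * (‖1 - herm z w‖) ^ (-c) : ℝ) : ℂ)

/-- The integral operator with kernel `K` (integration in `w` with respect to `ρ`)
is bounded from `L^p(μ)` to `L^q(ν)`: there is `C ≥ 0` such that for every
`f ∈ L^p(μ)` the defining integral converges absolutely for a.e. `z` and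
`‖A f‖_{L^q(ν)} ≤ C ‖f‖_{L^p(μ)}`. -/
def IsBddOp (n : ℕ) (K : Cn n → Cn n → ℂ) (ρ : Measure (Cn n))
    (p q : ℝ≥0∞) (μ ν : Measure (Cn n)) : Prop :=
  ∃ C : ℝ, 0 ≤ C ∧ ∀ f : Cn n → ℂ, MemLp f p μ →
    (∀ᵐ z ∂(vol n), Integrable (fun w => K z w * f w) ρ) ∧
    eLpNorm (fun z => ∫ w, K z w * f w ∂ρ) q ν ≤ ENNReal.ofReal C * eLpNorm f p μ

/-!
Test the boundedness on `f ≡ 1`, which lies in every `L^p_α` because `v_α` is a finite measure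
for `α > -1`. Then, for almost every `z` in the ball, the kernel
`w ↦ (1-|z|²)^a (1-|w|²)^b (1-⟨z,w⟩)^{-c}` is integrable over `B_n`. For fixed `|z| < 1` the
factor `(1-|z|²)^a (1-⟨z,w⟩)^{-c}` is continuous and nonvanishing on the closed ball, so
`(1-|w|²)^b` itself is integrable over `B_n`. In polar coordinates this is the finiteness of
`∫₀¹ r^{2n-1} (1-r²)^b dr`, which forces `b > -1`.
-/

open Set Metric

theorem integrableOn_one_sub_rpow_Ioo_iff {s γ : ℝ} (hs : s < 1) :
    IntegrableOn (fun y : ℝ => (1 - y) ^ γ) (Ioo s 1) ↔ -1 < γ := by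
  have reflect := IntervalIntegrable.comp_sub_left_iff (f := fun y : ℝ => y ^ γ)
    (a := 1 - s) (b := 0) 1
  rw [sub_sub_cancel, sub_zero] at reflect
  rw [← intervalIntegrable_iff_integrableOn_Ioo_of_le hs.le, reflect,
    show _ ↔ _ from ⟨IntervalIntegrable.symm, IntervalIntegrable.symm⟩,
    intervalIntegrable_iff_integrableOn_Ioo_of_le (by linarith),
    intervalIntegral.integrableOn_Ioo_rpow_iff (by linarith)]

theorem integrableOn_pow_mul_one_sub_sq_rpow_Ioo_iff (d : ℕ) (γ : ℝ) :
    IntegrableOn (fun y : ℝ => y ^ d * (1 - y ^ 2) ^ γ) (Ioo 0 1) ↔ -1 < γ := by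
  set g : ℝ → ℝ := fun y => y ^ d * (1 + y) ^ γ
  have hg : ContinuousOn g (Icc 0 1) := by
    refine ContinuousOn.mul (by fun_prop) (ContinuousOn.rpow_const (by fun_prop) ?_)
    intro y hy; left; linarith [hy.1]
  have factor : EqOn (fun y : ℝ => (1 - y) ^ γ * g y) (fun y => y ^ d * (1 - y ^ 2) ^ γ)
      (Ioo 0 1) := by
    intro y hy
    simp only [g]
    rw [show 1 - y ^ 2 = (1 - y) * (1 + y) by ring,
      Real.mul_rpow (by linarith [hy.2]) (by linarith [hy.1])]
    ring
  have g_pos : ∀ y : ℝ, 0 < y → 0 < g y := fun y hy =>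
    mul_pos (pow_pos hy d) (Real.rpow_pos_of_pos (by linarith) γ)
  constructor
  · intro h
    have hg' : ContinuousOn (fun y => (g y)⁻¹) (Icc (1 / 2) 1) :=
      (hg.mono (Icc_subset_Icc (by norm_num) le_rfl)).inv₀ fun y hy =>
        (g_pos y (by linarith [hy.1])).ne'
    rw [← integrableOn_one_sub_rpow_Ioo_iff (s := 1 / 2) (by norm_num)]
    refine ((h.mono_set (Ioo_subset_Ioo (by norm_num) le_rfl)).mul_continuousOn_of_subset hg'
      measurableSet_Ioo isCompact_Icc Ioo_subset_Icc_self).congr_fun (fun y hy => ?_)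
      measurableSet_Ioo
    have hy0 : 0 < y := by linarith [hy.1]
    simp only [← factor ⟨hy0, hy.2⟩, mul_inv_cancel_right₀ (g_pos y hy0).ne']
  · intro h
    exact (((integrableOn_one_sub_rpow_Ioo_iff zero_lt_one).2 h).mul_continuousOn_of_subset hg
      measurableSet_Ioo isCompact_Icc Ioo_subset_Icc_self).congr_fun factor measurableSet_Ioo

theorem integrableOn_one_sub_norm_sq_rpow_ball_iff {E : Type*} [NormedAddCommGroup E]
    [NormedSpace ℝ E] [MeasurableSpace E] [BorelSpace E] [FiniteDimensional ℝ E] [Nontrivial E]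
    (μ : Measure E) [μ.IsAddHaarMeasure] (γ : ℝ) :
    IntegrableOn (fun x : E => (1 - ‖x‖ ^ 2) ^ γ) (ball 0 1) μ ↔ -1 < γ := by
  rw [integrableOn_fun_norm_addHaar μ (f := fun r => (1 - r ^ 2) ^ γ)]
  exact integrableOn_pow_mul_one_sub_sq_rpow_Ioo_iff _ γ

section

variable {n : ℕ}

theorem norm_herm_le (z w : Cn n) : ‖herm z w‖ ≤ ‖z‖ * ‖w‖ := by
  have : herm z w = inner ℂ w z := by
    simp [herm, PiLp.inner_apply, RCLike.inner_apply]
  rw [this, mul_comm]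
  exact norm_inner_le_norm w z

theorem one_sub_herm_mem_slitPlane {z w : Cn n} (hz : ‖z‖ < 1) (hw : ‖w‖ ≤ 1) :
    1 - herm z w ∈ slitPlane := by
  rw [sub_eq_add_neg]
  refine mem_slitPlane_of_norm_lt_one ?_
  rw [norm_neg]
  calc ‖herm z w‖ ≤ ‖z‖ * ‖w‖ := norm_herm_le z w
    _ ≤ ‖z‖ * 1 := by gcongr
    _ < 1 := by simpa using hz

theorem continuous_herm_right (z : Cn n) : Continuous (herm z) := by
  unfold herm
  fun_prop

theorem Tker_mul_eq {a b c : ℝ} {z w : Cn n} (hz : ‖z‖ < 1) (hzw : 1 - herm z w ≠ 0) :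
    Tker n a b c z w * (((1 - ‖z‖ ^ 2) ^ (-a) : ℝ) * (1 - herm z w) ^ (c : ℂ))
      = ((1 - ‖w‖ ^ 2) ^ b : ℝ) := by
  have hz2 : 0 < 1 - ‖z‖ ^ 2 := by nlinarith [norm_nonneg z]
  rw [Tker, Complex.cpow_neg, Real.rpow_neg hz2.le]
  push_cast
  field_simp [(Real.rpow_pos_of_pos hz2 a).ne', cpow_ne_zero_iff.2 (Or.inl hzw)]

theorem integrableOn_one_sub_norm_sq_rpow_of_integrableOn_Tker {a b c : ℝ} {z : Cn n}
    (hz : ‖z‖ < 1) (hK : IntegrableOn (Tker n a b c z) (ball 0 1) volume) :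
    IntegrableOn (fun w : Cn n => (1 - ‖w‖ ^ 2) ^ b) (ball 0 1) volume := by
  have hcont : ContinuousOn
      (fun w => (((1 - ‖z‖ ^ 2) ^ (-a) : ℝ) : ℂ) * (1 - herm z w) ^ (c : ℂ)) (closedBall 0 1) :=
    continuousOn_const.mul <|
      ((continuous_const.sub (continuous_herm_right z)).continuousOn).cpow_const fun w hw =>
        one_sub_herm_mem_slitPlane hz (mem_closedBall_zero_iff.1 hw)
  have hre : IntegrableOn
      (fun w => (Tker n a b c z w *
        ((((1 - ‖z‖ ^ 2) ^ (-a) : ℝ) : ℂ) * (1 - herm z w) ^ (c : ℂ))).re) (ball 0 1) volume :=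
    (hK.mul_continuousOn_of_subset hcont measurableSet_ball (isCompact_closedBall 0 1)
      ball_subset_closedBall).re
  refine hre.congr_fun (fun w hw => ?_) measurableSet_ball
  have hw : ‖w‖ ≤ 1 := (mem_ball_zero_iff.1 hw).le
  simp only [Tker_mul_eq hz (slitPlane_ne_zero (one_sub_herm_mem_slitPlane hz hw)), ofReal_re]

instance isFiniteMeasure_vol : IsFiniteMeasure (vol n) := by
  constructor
  rw [vol, Measure.smul_apply, Measure.restrict_apply_univ, smul_eq_mul]
  exact ENNReal.mul_lt_top (ENNReal.inv_ne_top.2 (measure_ball_pos volume 0 one_pos).ne').lt_top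
    measure_ball_lt_top

theorem isFiniteMeasure_wvol (hn : 1 ≤ n) {α : ℝ} (hα : -1 < α) :
    IsFiniteMeasure (wvol n α) := by
  have : Nonempty (Fin n) := ⟨⟨0, hn⟩⟩
  have hweight : Integrable (fun z : Cn n => (1 - ‖z‖ ^ 2) ^ α) (vol n) :=
    ((integrableOn_one_sub_norm_sq_rpow_ball_iff volume α).2 hα).smul_measure
      (ENNReal.inv_ne_top.2 (measure_ball_pos volume 0 one_pos).ne')
  exact isFiniteMeasure_withDensity_ofReal (hweight.const_mul _).2

theorem IsBddOp.exists_integrableOn {K : Cn n → Cn n → ℂ} {p q : ℝ≥0∞}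
    {μ ν : Measure (Cn n)} [IsFiniteMeasure μ] (hK : IsBddOp n K (vol n) p q μ ν) :
    ∃ z ∈ ball (0 : Cn n) 1, IntegrableOn (K z) (ball 0 1) volume := by
  obtain ⟨C, -, hC⟩ := hK
  have hvol : volume (ball (0 : Cn n) 1) ≠ 0 := (measure_ball_pos volume 0 one_pos).ne'
  have hvol' : volume (ball (0 : Cn n) 1) ≠ ∞ := measure_ball_lt_top.ne
  have hae := (hC 1 (memLp_const 1)).1
  simp only [Pi.one_apply, mul_one] at hae
  rw [vol, unitBall, Measure.ae_ennreal_smul_measure_iff (ENNReal.inv_ne_zero.2 hvol')] at hae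
  have : (ae (volume.restrict (ball (0 : Cn n) 1))).NeBot := ae_restrict_neBot.2 hvol
  obtain ⟨z, hz, hzK⟩ := ((ae_restrict_mem measurableSet_ball).and hae).exists
  exact ⟨z, hz, (integrable_smul_measure (ENNReal.inv_ne_zero.2 hvol')
    (ENNReal.inv_ne_top.2 hvol)).1 hzK⟩

end

theorem stmt13_general (n : ℕ) (hn : 1 ≤ n) (p q : ℝ≥0∞) (α β a b c : ℝ) (hα : -1 < α)
    (hT : IsBddOp n (Tker n a b c) (vol n) p q
      (if p = ⊤ then vol n else wvol n α) (if q = ⊤ then vol n else wvol n β)) :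
    -1 < b := by
  have : Nonempty (Fin n) := ⟨⟨0, hn⟩⟩
  have := isFiniteMeasure_wvol hn hα
  have : IsFiniteMeasure (if p = ⊤ then vol n else wvol n α) := by split_ifs <;> infer_instance
  obtain ⟨z, hz, hzK⟩ := hT.exists_integrableOn
  exact (integrableOn_one_sub_norm_sq_rpow_ball_iff volume b).1
    (integrableOn_one_sub_norm_sq_rpow_of_integrableOn_Tker (mem_ball_zero_iff.1 hz) hzK)

/-- if `T_{a,b,c}` is bounded from `L^p_α` to `L^q_β` for some
`1 ≤ p, q ≤ ∞`, then `b > -1`. -/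
theorem stmt13 (n : ℕ) (hn : 1 ≤ n) (p q : ℝ≥0∞) (α β a b c : ℝ)
    (hp : 1 ≤ p) (hq : 1 ≤ q) (hα : -1 < α) (hβ : -1 < β)
    (hT : IsBddOp n (Tker n a b c) (vol n) p q
      (if p = ⊤ then vol n else wvol n α) (if q = ⊤ then vol n else wvol n β)) :
    -1 < b :=
  stmt13_general n hn p q α β a b c hα hT
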